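/- Let ρ(φ) = [[cos²φ, sinφ cosφ, 0],[sinφ cosφ, sin²φ, 0],[0,0,1]] and U(x₁,x₂,φ) = c₁(1−cos x₁) + c₂(1−cos x₂) + c_φ(1−cos φ) with c₁, c₂, c_φ ≠ 0. Then the set {(x₁,x₂,φ) ∈ (ℝ/2πℤ)³ : ρ(φ)ᵀ ∇U(x₁,x₂,φ) = 0} equals the union of the four circles {x₁ = a, φ = b, x₂ arbitrary} for a, b ∈ {0, π}. -/

import Mathlib

/-! Since `c_φ ≠ 0`, the third equation forces `sin φ = 0`, hence `cos² φ = 1`, and the first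
equation then reduces to `c₁ sin x₁ = 0`. So the critical set is `{sin x₁ = 0, sin φ = 0}`,
and `sin θ = 0` on the circle exactly for `θ ∈ {0, π}`. -/

open Real

theorem projection_system_eq_zero_iff {s c u v k : ℝ} (hcs : c ^ 2 + s ^ 2 = 1) (hk : k ≠ 0) :
    (c ^ 2 * u + s * c * v = 0 ∧ s * c * u + s ^ 2 * v = 0 ∧ k * s = 0) ↔ u = 0 ∧ s = 0 := by
  constructor
  · rintro ⟨h₁, -, h₃⟩
    have hs : s = 0 := (mul_eq_zero.mp h₃).resolve_left hk
    have hc : c ^ 2 = 1 := by simpa [hs] using hcs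
    exact ⟨by simpa [hs, hc] using h₁, hs⟩
  · rintro ⟨rfl, rfl⟩
    simp

theorem stmt_18_general (c1 c2 cphi : ℝ) (hc1 : c1 ≠ 0) (hcphi : cphi ≠ 0) :
    {p : Real.Angle × Real.Angle × Real.Angle |
        (p.2.2.cos ^ 2 * (c1 * p.1.sin) + p.2.2.sin * p.2.2.cos * (c2 * p.2.1.sin) = 0) ∧
        (p.2.2.sin * p.2.2.cos * (c1 * p.1.sin) + p.2.2.sin ^ 2 * (c2 * p.2.1.sin) = 0) ∧
        (cphi * p.2.2.sin = 0)} =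
      ⋃ a ∈ ({(0 : Real.Angle), ((Real.pi : ℝ) : Real.Angle)} : Set Real.Angle),
        ⋃ b ∈ ({(0 : Real.Angle), ((Real.pi : ℝ) : Real.Angle)} : Set Real.Angle),
          {p : Real.Angle × Real.Angle × Real.Angle | p.1 = a ∧ p.2.2 = b} := by
  ext p
  rw [Set.mem_ofPred_eq, projection_system_eq_zero_iff (Angle.cos_sq_add_sin_sq _) hcphi,
    mul_eq_zero, or_iff_right hc1, Angle.sin_eq_zero_iff, Angle.sin_eq_zero_iff]
  simp only [Set.mem_iUnion, Set.mem_insert_iff, Set.mem_singleton_iff, Set.mem_ofPred_eq,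
    exists_prop, exists_eq_or_imp, exists_eq_left]
  tauto

/-- on the torus `(ℝ/2πℤ)³` the critical set
`{(x₁,x₂,φ) : ρ(φ)ᵀ ∇U(x₁,x₂,φ) = 0}` of the constrained disc system, with
`∇U = (c₁ sin x₁, c₂ sin x₂, c_φ sin φ)` and `ρ(φ)` the given projection matrix,
equals the union of the four circles `{x₁ = a, φ = b}`, `a, b ∈ {0, π}`. -/
theorem stmt_18 (c1 c2 cphi : ℝ) (hc1 : c1 ≠ 0) (hc2 : c2 ≠ 0) (hcphi : cphi ≠ 0) :
    {p : Real.Angle × Real.Angle × Real.Angle |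
        (p.2.2.cos ^ 2 * (c1 * p.1.sin) + p.2.2.sin * p.2.2.cos * (c2 * p.2.1.sin) = 0) ∧
        (p.2.2.sin * p.2.2.cos * (c1 * p.1.sin) + p.2.2.sin ^ 2 * (c2 * p.2.1.sin) = 0) ∧
        (cphi * p.2.2.sin = 0)} =
      ⋃ a ∈ ({(0 : Real.Angle), ((Real.pi : ℝ) : Real.Angle)} : Set Real.Angle),
        ⋃ b ∈ ({(0 : Real.Angle), ((Real.pi : ℝ) : Real.Angle)} : Set Real.Angle),
          {p : Real.Angle × Real.Angle × Real.Angle | p.1 = a ∧ p.2.2 = b} :=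
  stmt_18_general c1 c2 cphi hc1 hcphi
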